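/- arXiv:2209.15265 — 3 statements merged into one kernel-verified Lean document; each statement's English description precedes it below -/
import Mathlib

section
/- Let x₁ and x₂ be independent standard Gaussian random variables and γ ∈ (−1, 1). Then E[1(x₁ ≥ 0)·1(γx₁ + √(1−γ²)x₂ ≥ 0)·x₁x₂] = (1−γ²)/(2π). -/
/-!
Integrate out `x₂` first. With `σ = √(1 - γ²)`, for `x₁ ≥ 0` the inner integral is
`x₁ · E[x₂ 1(x₂ ≥ -γx₁/σ)] = x₁ φ(γx₁/σ)`, since `∫_t^∞ y φ(y) dy = φ(t)`. Because
`φ(x) φ(γx/σ) = exp(-x²/(2σ²)) / (2π)`, the outer integral is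
`(2π)⁻¹ ∫₀^∞ x exp(-x²/(2σ²)) dx = σ²/(2π)`.
-/

open MeasureTheory ProbabilityTheory Real Set
open scoped NNReal

lemma integral_Ioi_mul_exp_neg_mul_sq {b : ℝ} (hb : 0 < b) (c : ℝ) :
    ∫ x in Ioi c, x * rexp (-b * x ^ 2) = rexp (-b * c ^ 2) / (2 * b) := by
  have hderiv (x : ℝ) :
      HasDerivAt (fun x ↦ -(2 * b)⁻¹ * rexp (-b * x ^ 2)) (x * rexp (-b * x ^ 2)) x := by
    refine (((hasDerivAt_pow 2 x).const_mul (-b)).exp.const_mul _).congr_deriv ?_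
    field_simp
    ring
  have hlim : Filter.Tendsto (fun x ↦ -(2 * b)⁻¹ * rexp (-b * x ^ 2)) Filter.atTop
      (nhds (-(2 * b)⁻¹ * 0)) :=
    (tendsto_exp_atBot.comp ((Filter.tendsto_pow_atTop two_ne_zero).const_mul_atTop_of_neg
      (neg_lt_zero.2 hb))).const_mul _
  rw [integral_Ioi_of_hasDerivAt_of_tendsto' (fun x _ ↦ hderiv x)
    (integrable_mul_exp_neg_mul_sq hb).integrableOn hlim]
  ring

lemma integral_indicator_Ici_gaussianReal {v : ℝ≥0} (hv : v ≠ 0) (t : ℝ) (f : ℝ → ℝ) :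
    ∫ x, (Ici t).indicator f x ∂gaussianReal 0 v = ∫ x in Ioi t, gaussianPDFReal 0 v x * f x := by
  simp_rw [integral_gaussianReal_eq_integral_smul hv, ← indicator_smul_apply,
    integral_indicator measurableSet_Ici, integral_Ici_eq_integral_Ioi, smul_eq_mul]

lemma integral_indicator_Ici_id_gaussianReal {v : ℝ≥0} (hv : v ≠ 0) (t : ℝ) :
    ∫ x, (Ici t).indicator id x ∂gaussianReal 0 v = v * gaussianPDFReal 0 v t := by
  have hv' : (0 : ℝ) < v := by positivity
  calc ∫ x, (Ici t).indicator id x ∂gaussianReal 0 v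
      = (√(2 * π * v))⁻¹ * ∫ x in Ioi t, x * rexp (-(2 * (v : ℝ))⁻¹ * x ^ 2) := by
        rw [integral_indicator_Ici_gaussianReal hv, ← integral_const_mul]
        congr with x
        simp only [gaussianPDFReal, sub_zero, id]
        ring_nf
    _ = v * gaussianPDFReal 0 v t := by
        rw [integral_Ioi_mul_exp_neg_mul_sq (by positivity), gaussianPDFReal]
        field_simp
        ring_nf

lemma gaussianPDFReal_mul_gaussianPDFReal (a b : ℝ) :
    gaussianPDFReal 0 1 a * gaussianPDFReal 0 1 b = (2 * π)⁻¹ * rexp (-(a ^ 2 + b ^ 2) / 2) := by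
  have h2π : √(2 * π) * √(2 * π) = 2 * π := mul_self_sqrt (by positivity)
  simp only [gaussianPDFReal, NNReal.coe_one, mul_one, sub_zero]
  rw [mul_mul_mul_comm, ← mul_inv, h2π, ← exp_add]
  ring_nf

lemma integral_ite_halfspace_mul_gaussianReal {γ σ : ℝ} (hσ : 0 < σ) (x : ℝ) :
    ∫ y, (if 0 ≤ x ∧ 0 ≤ γ * x + σ * y then x * y else 0) ∂gaussianReal 0 1
      = (Ici 0).indicator (fun s ↦ s * gaussianPDFReal 0 1 (-(γ * s) / σ)) x := by
  by_cases hx : 0 ≤ x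
  · have hhalf (y : ℝ) : 0 ≤ γ * x + σ * y ↔ y ∈ Ici (-(γ * x) / σ) := by
      rw [mem_Ici, div_le_iff₀ hσ]
      constructor <;> intro <;> linarith
    calc ∫ y, (if 0 ≤ x ∧ 0 ≤ γ * x + σ * y then x * y else 0) ∂gaussianReal 0 1
        = ∫ y, x * (Ici (-(γ * x) / σ)).indicator id y ∂gaussianReal 0 1 := by
          congr with y
          simp only [hx, true_and, hhalf, indicator_apply, id, mul_ite, mul_zero]
      _ = _ := by
          rw [integral_const_mul, integral_indicator_Ici_id_gaussianReal one_ne_zero,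
            indicator_of_mem (mem_Ici.2 hx), NNReal.coe_one, one_mul]
  · simp [hx]

lemma integral_indicator_Ici_mul_gaussianPDFReal {γ σ : ℝ} (hσ : 0 < σ) (h : γ ^ 2 + σ ^ 2 = 1) :
    ∫ x, (Ici 0).indicator (fun x ↦ x * gaussianPDFReal 0 1 (-(γ * x) / σ)) x ∂gaussianReal 0 1
      = σ ^ 2 / (2 * π) := by
  calc ∫ x, (Ici 0).indicator (fun x ↦ x * gaussianPDFReal 0 1 (-(γ * x) / σ)) x ∂gaussianReal 0 1
      = ∫ x in Ioi 0, (2 * π)⁻¹ * (x * rexp (-(2 * σ ^ 2)⁻¹ * x ^ 2)) := by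
        rw [integral_indicator_Ici_gaussianReal one_ne_zero]
        congr with x
        rw [mul_left_comm, gaussianPDFReal_mul_gaussianPDFReal, mul_left_comm]
        congr 3
        field_simp
        linear_combination (-x ^ 2) * h
    _ = σ ^ 2 / (2 * π) := by
        rw [integral_const_mul, integral_Ioi_mul_exp_neg_mul_sq (by positivity)]
        field_simp
        simp

/-- For independent standard Gaussians `x₁, x₂` and `γ ∈ (−1,1)`:
`E[1(x₁ ≥ 0) 1(γx₁ + √(1−γ²)x₂ ≥ 0) x₁ x₂] = (1−γ²)/(2π)`. -/
theorem gaussian_halfspace_cross_moment (γ : ℝ) (hγ : -1 < γ) (hγ' : γ < 1) :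
    ∫ x : ℝ × ℝ,
        (if 0 ≤ x.1 ∧ 0 ≤ γ * x.1 + Real.sqrt (1 - γ ^ 2) * x.2 then x.1 * x.2 else 0)
      ∂((gaussianReal 0 1).prod (gaussianReal 0 1)) = (1 - γ ^ 2) / (2 * Real.pi) := by
  have hγ2 : 0 < 1 - γ ^ 2 := by nlinarith
  set σ := √(1 - γ ^ 2)
  have hσ : 0 < σ := sqrt_pos.2 hγ2
  have hσ2 : σ ^ 2 = 1 - γ ^ 2 := sq_sqrt hγ2.le
  have hid : Integrable id (gaussianReal 0 1) := IsGaussian.integrable_id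
  have hint : Integrable (fun x : ℝ × ℝ ↦ if 0 ≤ x.1 ∧ 0 ≤ γ * x.1 + σ * x.2 then x.1 * x.2 else 0)
      ((gaussianReal 0 1).prod (gaussianReal 0 1)) := by
    refine (hid.mul_prod hid).mono ?_ (ae_of_all _ fun x ↦ ?_)
    · exact (Measurable.ite (by measurability) (by fun_prop) (by fun_prop)).aestronglyMeasurable
    · split_ifs <;> simp [mul_nonneg]
  rw [integral_prod _ hint]
  simp_rw [integral_ite_halfspace_mul_gaussianReal hσ]
  rw [integral_indicator_Ici_mul_gaussianPDFReal hσ (by linarith), hσ2]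
end

section
/- Let A₁, ..., A_k be matrices with A_j ∈ R^{n×r_j}, and suppose y = A_{i*} w* for some index i* and nonzero w* ∈ R^{r_{i*}}, where A_{i*}^T A_{i*} is invertible. If the irrepresentability condition ‖A_j^T A_{i*}(A_{i*}^T A_{i*})^{-1} (w*/‖w*‖₂)‖₂ < 1 holds for all j ≠ i*, then the point W* with W*_{i*} = w* and W*_j = 0 for j ≠ i* is the unique optimal solution of the group ℓ₁ problem: minimize ∑_{j=1}^k ‖w_j‖₂ subject to ∑_{j=1}^k A_j w_j = y. -/
open Matrix

/-- Euclidean (ℓ²) norm of a vector in `ℝ^d`. -/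
noncomputable def e2norm {d : ℕ} (x : Fin d → ℝ) : ℝ := Real.sqrt (∑ i, x i ^ 2)

lemma e2norm_nonneg {d : ℕ} (x : Fin d → ℝ) : 0 ≤ e2norm x := Real.sqrt_nonneg _

lemma e2norm_zero {d : ℕ} : e2norm (0 : Fin d → ℝ) = 0 := by
  simp [e2norm]

lemma e2norm_pos {d : ℕ} {x : Fin d → ℝ} (hx : x ≠ 0) : 0 < e2norm x := by
  have h : 0 < ∑ i, x i ^ 2 := by
    obtain ⟨i, hi⟩ := Function.ne_iff.mp hx
    exact Finset.sum_pos' (fun i _ => sq_nonneg _)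
      ⟨i, Finset.mem_univ i, lt_of_le_of_ne (sq_nonneg _) (Ne.symm (pow_ne_zero 2 hi))⟩
  exact Real.sqrt_pos.mpr h

lemma sq_e2norm {d : ℕ} (x : Fin d → ℝ) : e2norm x ^ 2 = ∑ i, x i ^ 2 :=
  Real.sq_sqrt (Finset.sum_nonneg fun i _ => sq_nonneg _)

/-- Cauchy–Schwarz for dot products. -/
lemma dotProduct_le {d : ℕ} (x y : Fin d → ℝ) : x ⬝ᵥ y ≤ e2norm x * e2norm y :=
  Real.sum_mul_le_sqrt_mul_sqrt _ x y

/-- If `y = A_{i*} w*` with `A_{i*}ᵀA_{i*}` invertible and the irrepresentability condition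
`‖A_jᵀ A_{i*} (A_{i*}ᵀA_{i*})⁻¹ (w*/‖w*‖)‖₂ < 1` holds for all `j ≠ i*`, then the point with
block `w*` at `i*` and zeros elsewhere is the unique optimal solution of the group ℓ₁ problem
`min ∑_j ‖w_j‖₂ s.t. ∑_j A_j w_j = y`. -/
theorem group_l1_unique_recovery (k n : ℕ) (r : Fin k → ℕ)
    (A : ∀ j : Fin k, Matrix (Fin n) (Fin (r j)) ℝ)
    (istar : Fin k) (wstar : Fin (r istar) → ℝ) (hws : wstar ≠ 0)
    (hinv : IsUnit ((A istar)ᵀ * A istar))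
    (hirr : ∀ j, j ≠ istar →
      e2norm (((A j)ᵀ * A istar * ((A istar)ᵀ * A istar)⁻¹).mulVec
        (fun t => wstar t / e2norm wstar)) < 1) :
    (∑ j, (A j).mulVec (Function.update (fun j => (0 : Fin (r j) → ℝ)) istar wstar j)
        = (A istar).mulVec wstar) ∧
    ∀ W : (j : Fin k) → Fin (r j) → ℝ,
      (∑ j, (A j).mulVec (W j)) = (A istar).mulVec wstar →
      W ≠ Function.update (fun j => (0 : Fin (r j) → ℝ)) istar wstar →
      (∑ j, e2norm (Function.update (fun j => (0 : Fin (r j) → ℝ)) istar wstar j)) <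
        ∑ j, e2norm (W j) := by
  have hdet : IsUnit ((A istar)ᵀ * A istar).det :=
    (Matrix.isUnit_iff_isUnit_det _).mp hinv
  set N := e2norm wstar with hN
  have hNpos : 0 < N := e2norm_pos hws
  set u : Fin (r istar) → ℝ := fun t => wstar t / N with hu
  -- the dual certificate
  set lam : Fin n → ℝ := (A istar * ((A istar)ᵀ * A istar)⁻¹).mulVec u with hlam
  -- A_jᵀ λ
  have hAtlam : ∀ j : Fin k, (A j)ᵀ.mulVec lam
      = ((A j)ᵀ * A istar * ((A istar)ᵀ * A istar)⁻¹).mulVec u := by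
    intro j
    rw [hlam, Matrix.mulVec_mulVec, ← Matrix.mul_assoc, Matrix.mul_assoc]
  have hAstarlam : (A istar)ᵀ.mulVec lam = u := by
    rw [hAtlam istar, Matrix.mul_nonsing_inv _ hdet, Matrix.one_mulVec]
  -- first conjunct
  have hfeas : (∑ j, (A j).mulVec (Function.update (fun j => (0 : Fin (r j) → ℝ)) istar wstar j)
      = (A istar).mulVec wstar) := by
    rw [Finset.sum_eq_single istar]
    · rw [Function.update_self]
    · intro j _ hj
      rw [Function.update_of_ne hj, Matrix.mulVec_zero]
    · intro h; exact absurd (Finset.mem_univ istar) h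
  refine ⟨hfeas, ?_⟩
  intro W hW hWne
  -- LHS equals N
  have hLHS : (∑ j, e2norm (Function.update (fun j => (0 : Fin (r j) → ℝ)) istar wstar j)) = N := by
    rw [Finset.sum_eq_single istar]
    · rw [Function.update_self]
    · intro j _ hj
      rw [Function.update_of_ne hj, e2norm_zero]
    · intro h; exact absurd (Finset.mem_univ istar) h
  rw [hLHS]
  -- u ⬝ᵥ wstar = N
  have hu_dot : u ⬝ᵥ wstar = N := by
    have : u ⬝ᵥ wstar = (∑ i, wstar i ^ 2) / N := by
      simp only [hu, dotProduct, Finset.sum_div]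
      exact Finset.sum_congr rfl fun i _ => by ring
    rw [this, ← sq_e2norm, ← hN, sq, mul_div_assoc, div_self hNpos.ne', mul_one]
  have hu_norm : e2norm u = 1 := by
    have h1 : ∀ t, u t ^ 2 = wstar t ^ 2 / N ^ 2 := fun t => by
      rw [hu]; ring
    have : (∑ t, u t ^ 2) = 1 := by
      rw [Finset.sum_congr rfl fun t _ => h1 t, ← Finset.sum_div, ← sq_e2norm, ← hN,
        div_self (by positivity)]
    rw [e2norm, this, Real.sqrt_one]
  -- N = λ ⬝ᵥ y
  have hkey : N = ∑ j, ((A j)ᵀ.mulVec lam) ⬝ᵥ (W j) := by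
    have h1 : ∀ j : Fin k, ((A j)ᵀ.mulVec lam) ⬝ᵥ (W j) = lam ⬝ᵥ (A j).mulVec (W j) := by
      intro j
      rw [Matrix.dotProduct_mulVec, Matrix.mulVec_transpose]
    calc N = u ⬝ᵥ wstar := hu_dot.symm
      _ = ((A istar)ᵀ.mulVec lam) ⬝ᵥ wstar := by rw [hAstarlam]
      _ = lam ⬝ᵥ (A istar).mulVec wstar := by
          rw [Matrix.dotProduct_mulVec, Matrix.mulVec_transpose]
      _ = lam ⬝ᵥ ∑ j, (A j).mulVec (W j) := by rw [hW]
      _ = ∑ j, lam ⬝ᵥ (A j).mulVec (W j) := by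
          simp [dotProduct, Finset.mul_sum, Finset.sum_apply]
          exact Finset.sum_comm
      _ = ∑ j, ((A j)ᵀ.mulVec lam) ⬝ᵥ (W j) := by
          exact Finset.sum_congr rfl fun j _ => (h1 j).symm
  -- termwise bounds
  have hterm_le : ∀ j : Fin k, ((A j)ᵀ.mulVec lam) ⬝ᵥ (W j) ≤ e2norm (W j) := by
    intro j
    calc ((A j)ᵀ.mulVec lam) ⬝ᵥ (W j) ≤ e2norm ((A j)ᵀ.mulVec lam) * e2norm (W j) :=
        dotProduct_le _ _
      _ ≤ 1 * e2norm (W j) := by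
          apply mul_le_mul_of_nonneg_right _ (e2norm_nonneg _)
          by_cases hj : j = istar
          · subst hj; rw [hAstarlam, hu_norm]
          · rw [hAtlam]; exact le_of_lt (hirr j hj)
      _ = e2norm (W j) := one_mul _
  -- case analysis
  by_cases hcase : ∃ j, j ≠ istar ∧ W j ≠ 0
  · obtain ⟨j0, hj0, hWj0⟩ := hcase
    have hstrict : ((A j0)ᵀ.mulVec lam) ⬝ᵥ (W j0) < e2norm (W j0) := by
      calc ((A j0)ᵀ.mulVec lam) ⬝ᵥ (W j0) ≤ e2norm ((A j0)ᵀ.mulVec lam) * e2norm (W j0) :=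
          dotProduct_le _ _
        _ < 1 * e2norm (W j0) := by
            apply mul_lt_mul_of_pos_right _ (e2norm_pos hWj0)
            rw [hAtlam]; exact hirr j0 hj0
        _ = e2norm (W j0) := one_mul _
    rw [hkey]
    exact Finset.sum_lt_sum (fun j _ => hterm_le j) ⟨j0, Finset.mem_univ j0, hstrict⟩
  · -- all off-support blocks are zero; derive contradiction
    exfalso
    push_neg at hcase
    have hWzero : ∀ j, j ≠ istar → W j = 0 := hcase
    have hsum : (A istar).mulVec (W istar) = (A istar).mulVec wstar := by
      rw [← hW, Finset.sum_eq_single istar]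
      · intro j _ hj; rw [hWzero j hj, Matrix.mulVec_zero]
      · intro h; exact absurd (Finset.mem_univ istar) h
    have hWistar : W istar = wstar := by
      have h2 : ((A istar)ᵀ * A istar).mulVec (W istar)
          = ((A istar)ᵀ * A istar).mulVec wstar := by
        rw [← Matrix.mulVec_mulVec, ← Matrix.mulVec_mulVec, hsum]
      have h3 := congrArg (((A istar)ᵀ * A istar)⁻¹.mulVec) h2
      rwa [Matrix.mulVec_mulVec, Matrix.mulVec_mulVec, Matrix.nonsing_inv_mul _ hdet,
        Matrix.one_mulVec, Matrix.one_mulVec] at h3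
    apply hWne
    funext j
    by_cases hj : j = istar
    · subst hj; rw [Function.update_self, hWistar]
    · rw [Function.update_of_ne hj]; exact hWzero j hj
end

section
/- Let θ ∈ [0, 1/2) and define g(θ) = 1/2 + θ + (1/2)∫_{q}^∞ r dF_{χ²}(r), where F_{χ²} is the CDF of a chi-squared random variable with one degree of freedom and q = F_{χ²}^{-1}(1−2θ). Then g is continuous and monotonically increasing on [0, 1/2), g(0) = 1/2, and g(θ) → 3/2 as θ → 1/2; consequently there is a unique θ* ∈ (0, 1/2) with g(θ*) = 1. -/
/-!
Write `g(θ) = 1/2 + θ + T(1 - 2θ)/2` with `T(p) = E[G²; p ≤ F(G²)]`. `T` is antitone, and it is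
continuous by dominated convergence because `F` is strictly increasing on `[0, ∞)`, so that
`F(G²)` has no atoms. Since `F < 1` we get `T(1) = 0`, and `T(0) = E[G²] = 1`; hence `g` is
continuous and strictly increasing from `1/2` to `3/2` on `[0, 1/2]`, and the intermediate value
theorem gives the unique `θ*`.
-/

open MeasureTheory ProbabilityTheory

/-- CDF of a chi-squared random variable with one degree of freedom: `F(r) = P(G² ≤ r)`. -/
noncomputable def chiCDF (r : ℝ) : ℝ := (gaussianReal 0 1 {x : ℝ | x ^ 2 ≤ r}).toReal

/-- `g(θ) = 1/2 + θ + (1/2)∫_{F⁻¹(1−2θ)}^∞ r dF(r)`, where the upper-tail partial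
expectation is written as `E[G² · 1(F(G²) ≥ 1 − 2θ)]`. -/
noncomputable def gfun (θ : ℝ) : ℝ :=
  1 / 2 + θ + (1 / 2) *
    ∫ x : ℝ, (if 1 - 2 * θ ≤ chiCDF (x ^ 2) then x ^ 2 else 0) ∂(gaussianReal 0 1)

open Filter Set

section TailIntegral

variable {α : Type*} [MeasurableSpace α] {μ : Measure α} {f g : α → ℝ}

lemma integrable_ite_le (hf : Measurable f) (hg : Integrable g μ) (a : ℝ) :
    Integrable (fun x => if a ≤ f x then g x else 0) μ :=
  (hg.indicator (measurableSet_le (measurable_const (a := a)) hf)).congr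
    (ae_of_all _ fun x => by simp only [Set.indicator_apply, Set.mem_ofPred_eq])

/-- Dominated convergence: off the null set `f ⁻¹' {a₀}` the integrand is locally constant
in `a` near `a₀`. -/
lemma continuous_integral_ite_le (hf : Measurable f) (hg : Integrable g μ)
    (hlevel : ∀ a, μ (f ⁻¹' {a}) = 0) :
    Continuous fun a => ∫ x, (if a ≤ f x then g x else 0) ∂μ := by
  have hbound (a : ℝ) (x : α) : ‖if a ≤ f x then g x else 0‖ ≤ ‖g x‖ := by
    split_ifs <;> simp
  refine continuous_iff_continuousAt.2 fun a₀ => continuousAt_of_dominated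
    (Eventually.of_forall fun a => (integrable_ite_le hf hg a).aestronglyMeasurable)
    (Eventually.of_forall fun a => ae_of_all _ (hbound a)) hg.norm ?_
  filter_upwards [measure_eq_zero_iff_ae_notMem.1 (hlevel a₀)] with x hx
  rcases (Ne.lt_or_gt hx : f x < a₀ ∨ a₀ < f x) with hlt | hgt
  · refine (continuousAt_const (y := (0 : ℝ))).congr ?_
    filter_upwards [eventually_gt_nhds hlt] with a ha
    exact (if_neg (not_le.2 ha)).symm
  · refine (continuousAt_const (y := g x)).congr ?_
    filter_upwards [eventually_lt_nhds hgt] with a ha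
    exact (if_pos ha.le).symm

lemma antitone_integral_ite_le (hf : Measurable f) (hg : Integrable g μ) (hg₀ : 0 ≤ g) :
    Antitone fun a => ∫ x, (if a ≤ f x then g x else 0) ∂μ := fun a b hab =>
  integral_mono (integrable_ite_le hf hg b) (integrable_ite_le hf hg a) fun x => by
    dsimp only
    split_ifs with hb ha <;> first | exact le_rfl | exact hg₀ x | exact absurd (hab.trans hb) ha

end TailIntegral

lemma integral_sq_gaussianReal : ∫ x, x ^ 2 ∂gaussianReal 0 1 = 1 := by
  have hvar := variance_of_integral_eq_zero measurable_id.aemeasurable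
    (integral_id_gaussianReal (μ := 0) (v := 1))
  simpa [variance_id_gaussianReal] using hvar.symm

lemma integrable_sq_gaussianReal : Integrable (fun x : ℝ => x ^ 2) (gaussianReal 0 1) :=
  (memLp_id_gaussianReal 2).integrable_sq

lemma monotone_chiCDF : Monotone chiCDF := fun _ _ hrs =>
  measureReal_mono fun _ hx => le_trans hx hrs

lemma chiCDF_le_one (r : ℝ) : chiCDF r ≤ 1 := measureReal_le_one

lemma chiCDF_nonneg (r : ℝ) : 0 ≤ chiCDF r := measureReal_nonneg

lemma strictMonoOn_chiCDF : StrictMonoOn chiCDF (Ici 0) := by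
  intro r hr s _ hrs
  have hsub : {x : ℝ | x ^ 2 ≤ r} ⊆ {x | x ^ 2 ≤ s} := fun _ hx => le_trans hx hrs.le
  have hIoo : Ioo (√r) (√s) ⊆ {x : ℝ | x ^ 2 ≤ s} \ {x | x ^ 2 ≤ r} := by
    intro x ⟨hrx, hxs⟩
    have hx : 0 < x := (Real.sqrt_nonneg r).trans_lt hrx
    exact ⟨((Real.lt_sqrt hx.le).1 hxs).le, not_le.2 ((Real.sqrt_lt' hx).1 hrx)⟩
  have hvol : volume (Ioo (√r) (√s)) ≠ 0 := by simp [Real.sqrt_lt_sqrt hr hrs]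
  have hpos : gaussianReal 0 1 ({x : ℝ | x ^ 2 ≤ s} \ {x | x ^ 2 ≤ r}) ≠ 0 := fun h =>
    hvol (gaussianReal_absolutelyContinuous' 0 one_ne_zero (measure_mono_null hIoo h))
  have hdiff := measureReal_sdiff (μ := gaussianReal 0 1) hsub
    (measurableSet_le (measurable_id.pow_const 2) measurable_const)
  exact sub_pos.1 (hdiff ▸ measureReal_nonneg.lt_of_ne' ((measureReal_ne_zero_iff).2 hpos))

lemma chiCDF_lt_one {r : ℝ} (hr : 0 ≤ r) : chiCDF r < 1 :=
  (strictMonoOn_chiCDF hr (hr.trans (lt_add_one r).le) (lt_add_one r)).trans_le (chiCDF_le_one _)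

lemma gaussianReal_chiCDF_sq_preimage (a : ℝ) :
    gaussianReal 0 1 ((fun x => chiCDF (x ^ 2)) ⁻¹' {a}) = 0 := by
  rcases eq_empty_or_nonempty ((fun x => chiCDF (x ^ 2)) ⁻¹' {a}) with h | ⟨x₀, hx₀⟩
  · rw [h, measure_empty]
  refine measure_mono_null (t := {x₀, -x₀}) (fun x hx => ?_) ?_
  · have hsq : x ^ 2 = x₀ ^ 2 := strictMonoOn_chiCDF.injOn (sq_nonneg x) (sq_nonneg x₀)
      (hx.trans hx₀.symm)
    exact sq_eq_sq_iff_eq_or_eq_neg.1 hsq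
  · exact gaussianReal_absolutelyContinuous 0 one_ne_zero ((toFinite _).measure_zero _)

/-- The paper's `∫_q^∞ r dF(r)` with `q = F⁻¹(p)`. -/
noncomputable def chiTailMoment (p : ℝ) : ℝ :=
  ∫ x : ℝ, (if p ≤ chiCDF (x ^ 2) then x ^ 2 else 0) ∂(gaussianReal 0 1)

lemma measurable_chiCDF_sq : Measurable fun x : ℝ => chiCDF (x ^ 2) :=
  monotone_chiCDF.measurable.comp (measurable_id.pow_const 2)

@[fun_prop]
lemma continuous_chiTailMoment : Continuous chiTailMoment :=
  continuous_integral_ite_le measurable_chiCDF_sq integrable_sq_gaussianReal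
    gaussianReal_chiCDF_sq_preimage

lemma antitone_chiTailMoment : Antitone chiTailMoment :=
  antitone_integral_ite_le measurable_chiCDF_sq integrable_sq_gaussianReal fun x => sq_nonneg x

lemma chiTailMoment_zero : chiTailMoment 0 = 1 := by
  simp only [chiTailMoment, if_pos (chiCDF_nonneg _), integral_sq_gaussianReal]

lemma chiTailMoment_one : chiTailMoment 1 = 0 := by
  simp only [chiTailMoment, if_neg (chiCDF_lt_one (sq_nonneg _)).not_ge, integral_zero]

lemma gfun_eq (θ : ℝ) : gfun θ = 1 / 2 + θ + 1 / 2 * chiTailMoment (1 - 2 * θ) := rfl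

lemma continuous_gfun : Continuous gfun := by
  simp only [funext gfun_eq]
  fun_prop

lemma strictMono_gfun : StrictMono gfun := fun a b hab => by
  have := antitone_chiTailMoment (by linarith : 1 - 2 * b ≤ 1 - 2 * a)
  rw [gfun_eq, gfun_eq]
  linarith

lemma gfun_zero : gfun 0 = 1 / 2 := by
  rw [gfun_eq, mul_zero, sub_zero, chiTailMoment_one]
  norm_num

lemma gfun_half : gfun (1 / 2) = 3 / 2 := by
  rw [gfun_eq, mul_one_div_cancel two_ne_zero, sub_self, chiTailMoment_zero]
  norm_num

/-- `g` is continuous and strictly increasing on `[0, 1/2)`, `g(0) = 1/2`,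
`g(θ) → 3/2` as `θ → 1/2⁻`, and there is a unique `θ* ∈ (0, 1/2)` with `g(θ*) = 1`. -/
theorem gfun_phase_threshold :
    ContinuousOn gfun (Set.Ico 0 (1 / 2)) ∧
    StrictMonoOn gfun (Set.Ico 0 (1 / 2)) ∧
    gfun 0 = 1 / 2 ∧
    Filter.Tendsto gfun (nhdsWithin (1 / 2) (Set.Iio (1 / 2))) (nhds (3 / 2)) ∧
    ∃! θ : ℝ, θ ∈ Set.Ioo 0 (1 / 2) ∧ gfun θ = 1 := by
  refine ⟨continuous_gfun.continuousOn, strictMono_gfun.strictMonoOn _, gfun_zero, ?_, ?_⟩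
  · rw [← gfun_half]
    exact continuous_gfun.continuousAt.tendsto.mono_left nhdsWithin_le_nhds
  · have hone : (1 : ℝ) ∈ Ioo (gfun 0) (gfun (1 / 2)) := by
      rw [gfun_zero, gfun_half]
      norm_num
    obtain ⟨θ, hθ, hgθ⟩ := intermediate_value_Ioo (by norm_num) continuous_gfun.continuousOn hone
    exact ⟨θ, ⟨hθ, hgθ⟩, fun θ' hθ' => strictMono_gfun.injective (hθ'.2.trans hgθ.symm)⟩
end
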